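/- arXiv:1803.11517 — 2 statements merged into one kernel-verified Lean document; each statement's English description precedes it below -/
import Mathlib

section
/- Let γ : [0,∞) → [0,∞) be a (c)*-comparison function and let (tₙ) be a sequence of nonnegative reals with t_{n+1} ≤ tₙ − γ(tₙ) for all n ≥ 1. Then the series ∑ₙ tₙ converges. -/
open scoped ENNReal
open Filter Topology

/-- `d` is a quasi-pseudometric on `X`. -/
def IsQPM {X : Type*} (d : X → X → ℝ) : Prop :=
  (∀ x y, 0 ≤ d x y) ∧ (∀ x, d x x = 0) ∧ (∀ x y z, d x z ≤ d x y + d y z)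

/-- `d` is a T₀-quasi-metric on `X`. -/
def IsT0QM {X : Type*} (d : X → X → ℝ) : Prop :=
  IsQPM d ∧ ∀ x y, d x y = 0 → d y x = 0 → x = y

/-- The topology τ(d) generated by the open balls of `d`. -/
def tauOf {X : Type*} (d : X → X → ℝ) : TopologicalSpace X :=
  TopologicalSpace.generateFrom {s | ∃ x ε, 0 < ε ∧ s = {y | d x y < ε}}

/-- The symmetrized (max) function `dˢ`. -/
def dS {X : Type*} (d : X → X → ℝ) : X → X → ℝ := fun x y => max (d x y) (d y x)

/-- Left K-Cauchy sequence. -/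
def LeftKCauchy {X : Type*} (d : X → X → ℝ) (x : ℕ → X) : Prop :=
  ∀ ε > 0, ∃ n₀ : ℕ, ∀ k n : ℕ, n₀ ≤ k → k ≤ n → d (x k) (x n) < ε

/-- `d`-convergence of a sequence to a point. -/
def DConv {X : Type*} (d : X → X → ℝ) (x : ℕ → X) (l : X) : Prop :=
  Filter.Tendsto (fun n => d (x n) l) Filter.atTop (nhds 0)

/-- Left K-completeness. -/
def LeftKComplete {X : Type*} (d : X → X → ℝ) : Prop :=
  ∀ x : ℕ → X, LeftKCauchy d x → ∃ l, DConv d x l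

/-- Smyth completeness. -/
def SmythComplete {X : Type*} (d : X → X → ℝ) : Prop :=
  ∀ x : ℕ → X, LeftKCauchy d x → ∃ l, DConv (dS d) x l

/-- The (extended) Hausdorff quasi-pseudometric. -/
noncomputable def Hqpm {X : Type*} (d : X → X → ℝ) (A B : Set X) : ℝ≥0∞ :=
  max (⨆ a ∈ A, ⨅ b ∈ B, ENNReal.ofReal (d a b))
      (⨆ b ∈ B, ⨅ a ∈ A, ENNReal.ofReal (d a b))

/-- A (c)*-comparison function. -/
def IsCStarComparison (γ : ℝ → ℝ) : Prop :=
  (MonotoneOn γ (Set.Ici 0)) ∧ γ 0 = 0 ∧ (∀ t : ℝ, 0 < t → 0 < γ t ∧ γ t < t) ∧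
  (∀ t : ℕ → ℝ, (∀ n, 0 < t n) → Summable (fun n => γ (t n)) → Summable t)

/-- `A` is bounded w.r.t. the metric `dˢ`. -/
def DSBounded {X : Type*} (d : X → X → ℝ) (A : Set X) : Prop :=
  ∃ M : ℝ, ∀ x ∈ A, ∀ y ∈ A, dS d x y < M

/-- Membership in `CB(X)`: nonempty, closed and bounded in `dˢ`. -/
def InCB {X : Type*} (d : X → X → ℝ) (A : Set X) : Prop :=
  A.Nonempty ∧ IsClosed[tauOf (dS d)] A ∧ DSBounded d A

theorem stmt9 (γ : ℝ → ℝ) (hγ : IsCStarComparison γ)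
    (t : ℕ → ℝ) (hnn : ∀ n, 0 ≤ t n)
    (hrec : ∀ n, 1 ≤ n → t (n + 1) ≤ t n - γ (t n)) :
    Summable t := by
  obtain ⟨hmono, hγ0, hpos, hsum⟩ := hγ
  by_cases hall : ∀ n, 1 ≤ n → 0 < t n
  · -- all positive case
    set s : ℕ → ℝ := fun n => t (n + 1) with hs
    have hspos : ∀ n, 0 < s n := fun n => hall (n+1) (Nat.le_add_left 1 n)
    have hγs_nonneg : ∀ n, 0 ≤ γ (s n) := fun n => (hpos (s n) (hspos n)).1.le
    have hbound : ∀ N, ∑ n ∈ Finset.range N, γ (s n) ≤ t 1 := by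
      intro N
      have key : ∀ N, ∑ n ∈ Finset.range N, γ (s n) ≤ t 1 - t (N + 1) := by
        intro N
        induction N with
        | zero => simp
        | succ N ih =>
          rw [Finset.sum_range_succ]
          have h1 := hrec (N + 1) (Nat.le_add_left 1 N)
          have : γ (s N) ≤ t (N + 1) - t (N + 2) := by
            simp only [hs]; linarith
          linarith
      have := key N
      have := hnn (N + 1)
      linarith
    have hγsum : Summable (fun n => γ (s n)) :=
      summable_of_sum_range_le hγs_nonneg hbound
    have hssum : Summable s := hsum s hspos hγsum
    exact (summable_nat_add_iff 1).mp hssum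
  · push_neg at hall
    obtain ⟨n, hn1, hn0⟩ := hall
    have htn : t n = 0 := le_antisymm hn0 (hnn n)
    have hzero : ∀ m, t (n + m) = 0 := by
      intro m
      induction m with
      | zero => simpa using htn
      | succ m ih =>
        have h1 := hrec (n + m) (le_trans hn1 (Nat.le_add_right n m))
        have : t (n + m + 1) ≤ t (n + m) - γ (t (n + m)) := h1
        rw [ih, hγ0] at this
        have := hnn (n + m + 1)
        have : t (n + m + 1) = 0 := by linarith
        rw [Nat.add_succ]; exact this
    have : Summable (fun m => t (m + n)) := by
      have : (fun m => t (m + n)) = fun _ => (0 : ℝ) := by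
        funext m; rw [Nat.add_comm]; exact hzero m
      rw [this]; exact summable_zero
    exact (summable_nat_add_iff n).mp this
end

section
/- Let X = {1/2ⁿ : n = 0,1,2,…} ∪ {0} with d(x,y) = y − x if y ≥ x and d(x,y) = 2(x − y) if x > y. Then (X,d) is left K-complete: every left K-Cauchy sequence in X is d-convergent. -/
open scoped ENNReal
open Filter Topology

noncomputable def dEx : ℝ → ℝ → ℝ := fun x y => if x ≤ y then y - x else 2 * (x - y)

def XEx : Set ℝ := {x | ∃ n : ℕ, x = 1 / 2 ^ n} ∪ {0}

lemma abs_le_dEx (a b : ℝ) : |a - b| ≤ dEx a b := by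
  unfold dEx
  split_ifs with h
  · rw [abs_sub_comm, abs_of_nonneg (by linarith)]
  · rw [abs_of_nonneg (by linarith)]; linarith

lemma dEx_le (a b : ℝ) : dEx a b ≤ 2 * |a - b| := by
  unfold dEx
  split_ifs with h
  · rw [abs_sub_comm, abs_of_nonneg (by linarith)]; linarith
  · rw [abs_of_nonneg (by linarith)]

lemma dEx_nonneg (a b : ℝ) : 0 ≤ dEx a b := le_trans (abs_nonneg _) (abs_le_dEx a b)

lemma isClosed_XEx : IsClosed XEx := by
  have h : XEx = insert (0 : ℝ) (Set.range fun n : ℕ => 1 / 2 ^ n) := by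
    ext x
    simp [XEx, Set.mem_insert_iff, or_comm, eq_comm]
  rw [h]
  have ht : Filter.Tendsto (fun n : ℕ => (1 : ℝ) / 2 ^ n) Filter.atTop (nhds 0) := by
    have := tendsto_pow_atTop_nhds_zero_of_lt_one (by norm_num : (0:ℝ) ≤ 1/2)
      (by norm_num : (1:ℝ)/2 < 1)
    exact this.congr (fun n => by rw [div_pow, one_pow])
  exact ht.isCompact_insert_range.isClosed

theorem stmt14 :
    LeftKComplete (fun x y : XEx => dEx x y) := by
  intro x hx
  -- the real-valued sequence
  set f : ℕ → ℝ := fun n => (x n : ℝ) with hf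
  have hcauchy : CauchySeq f := by
    rw [Metric.cauchySeq_iff']
    intro ε hε
    obtain ⟨n₀, hn₀⟩ := hx ε hε
    refine ⟨n₀, fun n hn => ?_⟩
    calc dist (f n) (f n₀) = |f n₀ - f n| := by rw [Real.dist_eq, abs_sub_comm]
      _ ≤ dEx (f n₀) (f n) := abs_le_dEx _ _
      _ < ε := hn₀ n₀ n le_rfl hn
  obtain ⟨L, hL⟩ := cauchySeq_tendsto_of_complete hcauchy
  have hLmem : L ∈ XEx := isClosed_XEx.mem_of_tendsto hL
    (Filter.Eventually.of_forall fun n => (x n).2)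
  refine ⟨⟨L, hLmem⟩, ?_⟩
  have h0 : Filter.Tendsto (fun n => 2 * |f n - L|) Filter.atTop (nhds 0) := by
    have := hL.sub_const L
    have habs : Filter.Tendsto (fun n => |f n - L|) Filter.atTop (nhds 0) := by
      simpa using this.abs
    simpa using habs.const_mul 2
  refine squeeze_zero (fun n => dEx_nonneg _ _) (fun n => dEx_le _ _) h0
end
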